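/- Under the split Bregman iteration setting, suppose β* ∈ ℝ^p is a global minimizer of Φ(β) = V(β) + λ₁‖β‖₁ + λ₂‖Lβ‖₁, and let h* ∈ ∂V(β*), p* ∈ ∂‖·‖₁(β*), q* ∈ ∂‖·‖₁(Lβ*) satisfy h* + λ₁p* + λ₂Lᵀq* = 0. Then the ℓ1 Bregman distances along the iterates vanish: lim_{k→∞} [ ‖β^k‖₁ − ‖β*‖₁ − ⟨p*, β^k − β*⟩ ] = 0 and lim_{k→∞} [ ‖Lβ^k‖₁ − ‖Lβ*‖₁ − ⟨q*, Lβ^k − Lβ*⟩ ] = 0. -/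

import Mathlib

open Filter Matrix Finset

/-- The ℓ1 norm on `Fin d → ℝ`. -/
noncomputable def l1 {d : ℕ} (x : Fin d → ℝ) : ℝ := ∑ i, |x i|

/-- The Euclidean (ℓ2) norm on `Fin d → ℝ`. -/
noncomputable def l2 {d : ℕ} (x : Fin d → ℝ) : ℝ := Real.sqrt (∑ i, (x i) ^ 2)

/-- The Euclidean inner product on `Fin d → ℝ`. -/
def dotp {d : ℕ} (x y : Fin d → ℝ) : ℝ := ∑ i, x i * y i

/-- `g` is a subgradient of `f` at `x`. -/
def IsSubgrad {d : ℕ} (f : (Fin d → ℝ) → ℝ) (x g : Fin d → ℝ) : Prop :=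
  ∀ z, f z ≥ f x + dotp g (z - x)

/-!
Shift every variable by its value at the solution: `β*` for `β` and `a`, `Lβ*` for `b`,
`λ₁p*` for `u`, `λ₂q*` for `v`. By the optimality condition the shifted iterates obey the
same recursion, and polarization turns it into an exact energy balance for the Lyapunov
function `δ₂‖u - λ₁p*‖² + δ₁‖v - λ₂q*‖² + δ₁δ₂μ₁‖a - β*‖² + δ₁δ₂μ₂‖b - Lβ*‖²`. By
monotonicity of subgradients and `δᵢ ≤ μᵢ` it decreases at each step by at least positive
multiples of the `ℓ1` Bregman distances at `a^{k+1}`, `b^{k+1}` and of `‖β^{k+1} - a^k‖²`,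
`‖Lβ^{k+1} - b^k‖²`. Being nonnegative, it has summable decrements, so all four quantities
tend to `0`. Finally, subgradients of `‖·‖₁` have entries in `[-1, 1]`, so the `ℓ1` Bregman
distance is `2`-Lipschitz in its first argument for `‖·‖₁`, which moves the limits from
`a^k`, `b^k` to `β^{k+1}`, `Lβ^{k+1}`.
-/

theorem dotp_eq_dotProduct {d : ℕ} (x y : Fin d → ℝ) : dotp x y = x ⬝ᵥ y := rfl

theorem dotProduct_self_nonneg {ι : Type*} [Fintype ι] (x : ι → ℝ) : 0 ≤ x ⬝ᵥ x :=
  Fintype.sum_nonneg fun i => mul_self_nonneg (x i)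

def bregmanDist {d : ℕ} (f : (Fin d → ℝ) → ℝ) (g x y : Fin d → ℝ) : ℝ :=
  f x - f y - dotp g (x - y)

theorem l1_add_le {d : ℕ} (x y : Fin d → ℝ) : l1 (x + y) ≤ l1 x + l1 y := by
  simp only [l1, Pi.add_apply, ← Finset.sum_add_distrib]
  exact Finset.sum_le_sum fun i _ => abs_add_le (x i) (y i)

theorem l1_single {d : ℕ} (i : Fin d) (c : ℝ) : l1 (Pi.single i c) = |c| := by
  simp [l1, Pi.single_apply, apply_ite abs]

theorem neg_dotp_le_l1 {d : ℕ} {g : Fin d → ℝ} (hg : ∀ i, |g i| ≤ 1) (z : Fin d → ℝ) :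
    -dotp g z ≤ l1 z := by
  rw [dotp, ← Finset.sum_neg_distrib]
  refine Finset.sum_le_sum fun i _ => ?_
  calc -(g i * z i) ≤ |g i * z i| := neg_le_abs _
    _ = |g i| * |z i| := abs_mul _ _
    _ ≤ |z i| := mul_le_of_le_one_left (abs_nonneg _) (hg i)

theorem l1_le_mul_sqrt_dotProduct_self {d : ℕ} (z : Fin d → ℝ) :
    l1 z ≤ d * √(z ⬝ᵥ z) := by
  have hcoord : ∀ i, |z i| ≤ √(z ⬝ᵥ z) := fun i => by
    rw [← Real.sqrt_sq_eq_abs, sq]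
    exact Real.sqrt_le_sqrt
      (Finset.single_le_sum (fun j _ => mul_self_nonneg (z j)) (Finset.mem_univ i))
  calc l1 z ≤ ∑ _i : Fin d, √(z ⬝ᵥ z) := Finset.sum_le_sum fun i _ => hcoord i
    _ = d * √(z ⬝ᵥ z) := by simp

theorem tendsto_l1_zero_of_dotProduct_self {α : Type*} {l : Filter α} {d : ℕ}
    {z : α → Fin d → ℝ} (hz : Tendsto (fun k => z k ⬝ᵥ z k) l (nhds 0)) :
    Tendsto (fun k => l1 (z k)) l (nhds 0) := by
  have hsqrt : Tendsto (fun k => (d : ℝ) * √(z k ⬝ᵥ z k)) l (nhds 0) := by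
    simpa using hz.sqrt.const_mul (d : ℝ)
  exact squeeze_zero (fun k => Finset.sum_nonneg fun i _ => abs_nonneg _)
    (fun k => l1_le_mul_sqrt_dotProduct_self (z k)) hsqrt

namespace IsSubgrad

variable {d : ℕ} {f : (Fin d → ℝ) → ℝ}

theorem bregmanDist_nonneg {y g : Fin d → ℝ} (hg : IsSubgrad f y g) (x : Fin d → ℝ) :
    0 ≤ bregmanDist f g x y := by
  have := hg x
  unfold bregmanDist
  linarith

theorem bregmanDist_le {x g' : Fin d → ℝ} (hx : IsSubgrad f x g') (y g : Fin d → ℝ) :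
    bregmanDist f g x y ≤ (g' - g) ⬝ᵥ (x - y) := by
  have := hx y
  simp only [bregmanDist, dotp_eq_dotProduct, sub_dotProduct, dotProduct_sub] at this ⊢
  linarith

theorem dotProduct_sub_nonneg {x y g g' : Fin d → ℝ} (hx : IsSubgrad f x g')
    (hy : IsSubgrad f y g) : 0 ≤ (g' - g) ⬝ᵥ (x - y) :=
  (hy.bregmanDist_nonneg x).trans (hx.bregmanDist_le y g)

theorem abs_apply_le_one {y g : Fin d → ℝ} (hg : IsSubgrad l1 y g) (i : Fin d) :
    |g i| ≤ 1 := by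
  have key : ∀ c : ℝ, g i * c ≤ |c| := fun c => by
    have h := hg (y + Pi.single i c)
    have hle := l1_add_le y (Pi.single i c)
    simp only [add_sub_cancel_left, dotp_eq_dotProduct, dotProduct_single, l1_single] at h hle
    linarith
  have h1 := key 1
  have h2 := key (-1)
  simp only [mul_one, mul_neg, abs_one, abs_neg] at h1 h2
  exact abs_le.mpr ⟨by linarith, h1⟩

theorem bregmanDist_l1_le {y g : Fin d → ℝ} (hg : IsSubgrad l1 y g) (x z : Fin d → ℝ) :
    bregmanDist l1 g x y ≤ bregmanDist l1 g z y + 2 * l1 (x - z) := by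
  have htri : l1 x ≤ l1 z + l1 (x - z) := by
    simpa using l1_add_le z (x - z)
  have hdot := neg_dotp_le_l1 hg.abs_apply_le_one (x - z)
  have hsplit : dotp g (x - y) = dotp g (z - y) + dotp g (x - z) := by
    simp only [dotp_eq_dotProduct, dotProduct_sub]
    ring
  unfold bregmanDist
  linarith

theorem tendsto_bregmanDist_l1 {α : Type*} {l : Filter α} {y g : Fin d → ℝ}
    (hg : IsSubgrad l1 y g) {x z : α → Fin d → ℝ}
    (hz : Tendsto (fun k => bregmanDist l1 g (z k) y) l (nhds 0))
    (hxz : Tendsto (fun k => (x k - z k) ⬝ᵥ (x k - z k)) l (nhds 0)) :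
    Tendsto (fun k => bregmanDist l1 g (x k) y) l (nhds 0) := by
  refine squeeze_zero (fun k => hg.bregmanDist_nonneg (x k))
    (fun k => hg.bregmanDist_l1_le (x k) (z k)) ?_
  simpa using hz.add ((tendsto_l1_zero_of_dotProduct_self hxz).const_mul 2)

end IsSubgrad

theorem tendsto_zero_of_succ_add_mul_le {E f : ℕ → ℝ} {c : ℝ} (hc : 0 < c)
    (hE : ∀ k, 0 ≤ E k) (hf : ∀ k, 0 ≤ f k) (hdecr : ∀ k, E (k + 1) + c * f k ≤ E k) :
    Tendsto f atTop (nhds 0) := by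
  refine (summable_of_sum_range_le hf (c := E 0 / c) fun n => ?_).tendsto_atTop_zero
  have htel : c * ∑ k ∈ Finset.range n, f k ≤ E 0 - E n := by
    rw [Finset.mul_sum, ← Finset.sum_range_sub']
    exact Finset.sum_le_sum fun k _ => by linarith [hdecr k]
  rw [le_div_iff₀ hc]
  linarith [hE n]

section ErrorIdentity

variable {R ι κ : Type*} [CommRing R] [Fintype ι] [Fintype κ]

theorem splitBregman_block_identity (lam mu del : R) {y a a' u u' g : ι → R}
    (hg : lam • g - u + mu • (a' - y) = 0) (hu : u' = u + del • (y - a')) :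
    u' ⬝ᵥ u' + del * mu * (a' ⬝ᵥ a') + 2 * del * lam * (g ⬝ᵥ a')
        + del * (mu - del) * ((y - a') ⬝ᵥ (y - a')) + del * mu * ((y - a) ⬝ᵥ (y - a))
      = u ⬝ᵥ u + del * mu * (a ⬝ᵥ a) + 2 * del * ((u + mu • (y - a)) ⬝ᵥ y) := by
  subst hu
  simp only [dotProduct, Finset.mul_sum, ← Finset.sum_add_distrib]
  refine Finset.sum_congr rfl fun i _ => ?_
  have hgi := congrFun hg i
  simp only [Pi.add_apply, Pi.sub_apply, Pi.smul_apply, smul_eq_mul, Pi.zero_apply] at hgi ⊢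
  linear_combination (2 * del * a' i) * hgi

def splitBregmanLyapunov (del1 del2 mu1 mu2 : R) (u a : ι → R) (w b : κ → R) : R :=
  del2 * (u ⬝ᵥ u) + del1 * (w ⬝ᵥ w) + del1 * del2 * mu1 * (a ⬝ᵥ a)
    + del1 * del2 * mu2 * (b ⬝ᵥ b)

theorem splitBregman_error_identity (L : Matrix κ ι R) (lam1 lam2 mu1 mu2 del1 del2 : R)
    {x a a' u u' r g : ι → R} {b b' w w' q : κ → R}
    (h1 : r + u + Lᵀ *ᵥ w + mu1 • (x - a) + mu2 • (Lᵀ *ᵥ (L *ᵥ x - b)) = 0)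
    (h2 : lam1 • g - u + mu1 • (a' - x) = 0)
    (h3 : lam2 • q - w + mu2 • (b' - L *ᵥ x) = 0)
    (h4 : u' = u + del1 • (x - a'))
    (h5 : w' = w + del2 • (L *ᵥ x - b')) :
    splitBregmanLyapunov del1 del2 mu1 mu2 u' a' w' b'
        + 2 * del1 * del2 * (r ⬝ᵥ x + lam1 * (g ⬝ᵥ a') + lam2 * (q ⬝ᵥ b'))
        + del1 * del2 * (mu1 - del1) * ((x - a') ⬝ᵥ (x - a'))
        + del1 * del2 * mu1 * ((x - a) ⬝ᵥ (x - a))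
        + del1 * del2 * (mu2 - del2) * ((L *ᵥ x - b') ⬝ᵥ (L *ᵥ x - b'))
        + del1 * del2 * mu2 * ((L *ᵥ x - b) ⬝ᵥ (L *ᵥ x - b))
      = splitBregmanLyapunov del1 del2 mu1 mu2 u a w b := by
  have hx := splitBregman_block_identity lam1 mu1 del1 (a := a) h2 h4
  have hLx := splitBregman_block_identity lam2 mu2 del2 (a := b) h3 h5
  have hcoupling : r ⬝ᵥ x + (u + mu1 • (x - a)) ⬝ᵥ x
      + (w + mu2 • (L *ᵥ x - b)) ⬝ᵥ (L *ᵥ x) = 0 := by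
    have := congrArg (· ⬝ᵥ x) h1
    simp only [add_dotProduct, smul_dotProduct, zero_dotProduct, mulVec_transpose,
      ← dotProduct_mulVec, smul_eq_mul] at this ⊢
    linear_combination this
  unfold splitBregmanLyapunov
  linear_combination del2 * hx + del1 * hLx + 2 * del1 * del2 * hcoupling

end ErrorIdentity

theorem splitBregmanLyapunov_nonneg {ι κ : Type*} [Fintype ι] [Fintype κ]
    {del1 del2 mu1 mu2 : ℝ} (hdel1 : 0 ≤ del1) (hdel2 : 0 ≤ del2) (hmu1 : 0 ≤ mu1)
    (hmu2 : 0 ≤ mu2) (u a : ι → ℝ) (w b : κ → ℝ) :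
    0 ≤ splitBregmanLyapunov del1 del2 mu1 mu2 u a w b := by
  unfold splitBregmanLyapunov
  have := dotProduct_self_nonneg u
  have := dotProduct_self_nonneg w
  have := dotProduct_self_nonneg a
  have := dotProduct_self_nonneg b
  positivity

theorem splitBregmanLyapunov_step_le {p m : ℕ} {V : (Fin p → ℝ) → ℝ}
    (L : Matrix (Fin m) (Fin p) ℝ)
    {lam1 lam2 mu1 mu2 del1 del2 : ℝ} (hlam1 : 0 ≤ lam1) (hlam2 : 0 ≤ lam2)
    (hdel1 : 0 ≤ del1) (hdel1' : del1 ≤ mu1) (hdel2 : 0 ≤ del2) (hdel2' : del2 ≤ mu2)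
    {x a a' u u' r g xs rs gs : Fin p → ℝ} {b b' w w' q qs : Fin m → ℝ}
    (hr : IsSubgrad V x r) (hg : IsSubgrad l1 a' g) (hq : IsSubgrad l1 b' q)
    (hrs : IsSubgrad V xs rs)
    (hopt : rs + lam1 • gs + lam2 • (Lᵀ *ᵥ qs) = 0)
    (h1 : (0 : Fin p → ℝ) = r + u + Lᵀ *ᵥ w + mu1 • (x - a) + mu2 • (Lᵀ *ᵥ (L *ᵥ x - b)))
    (h2 : lam1 • g - u + mu1 • (a' - x) = 0)
    (h3 : lam2 • q - w + mu2 • (b' - L *ᵥ x) = 0)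
    (h4 : u' = u + del1 • (x - a'))
    (h5 : w' = w + del2 • (L *ᵥ x - b')) :
    splitBregmanLyapunov del1 del2 mu1 mu2 (u' - lam1 • gs) (a' - xs) (w' - lam2 • qs)
          (b' - L *ᵥ xs)
        + 2 * del1 * del2 * lam1 * bregmanDist l1 gs a' xs
        + 2 * del1 * del2 * lam2 * bregmanDist l1 qs b' (L *ᵥ xs)
        + del1 * del2 * mu1 * ((x - a) ⬝ᵥ (x - a))
        + del1 * del2 * mu2 * ((L *ᵥ x - b) ⬝ᵥ (L *ᵥ x - b))
      ≤ splitBregmanLyapunov del1 del2 mu1 mu2 (u - lam1 • gs) (a - xs) (w - lam2 • qs)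
          (b - L *ᵥ xs) := by
  -- `hopt` says that the solution is a fixed point of the iteration; subtract it.
  have hid := splitBregman_error_identity L lam1 lam2 mu1 mu2 del1 del2
    (x := x - xs) (a := a - xs) (a' := a' - xs) (u := u - lam1 • gs) (u' := u' - lam1 • gs)
    (r := r - rs) (g := g - gs) (b := b - L *ᵥ xs) (b' := b' - L *ᵥ xs) (w := w - lam2 • qs)
    (w' := w' - lam2 • qs) (q := q - qs)
    (by
      simp only [mulVec_sub, mulVec_smul, sub_sub_sub_cancel_right] at h1 ⊢
      linear_combination (norm := module) -h1 - hopt)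
    (by
      simp only [sub_sub_sub_cancel_right]
      linear_combination (norm := module) h2)
    (by
      simp only [mulVec_sub, sub_sub_sub_cancel_right]
      linear_combination (norm := module) h3)
    (by linear_combination (norm := module) h4)
    (by
      simp only [mulVec_sub, sub_sub_sub_cancel_right]
      linear_combination (norm := module) h5)
  simp only [mulVec_sub, sub_sub_sub_cancel_right] at hid
  have hdd : 0 ≤ del1 * del2 := mul_nonneg hdel1 hdel2
  have hV := mul_nonneg hdd (hr.dotProduct_sub_nonneg hrs)
  have hDa := mul_le_mul_of_nonneg_left (hg.bregmanDist_le xs gs) (mul_nonneg hdd hlam1)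
  have hDb := mul_le_mul_of_nonneg_left (hq.bregmanDist_le (L *ᵥ xs) qs)
    (mul_nonneg hdd hlam2)
  have hxa := mul_nonneg (mul_nonneg hdd (sub_nonneg.mpr hdel1'))
    (dotProduct_self_nonneg (x - a'))
  have hLxb := mul_nonneg (mul_nonneg hdd (sub_nonneg.mpr hdel2'))
    (dotProduct_self_nonneg (L *ᵥ x - b'))
  linarith

theorem splitBregman_bregmanDistance_l1_vanishes_general
    {p m : ℕ}
    (V : (Fin p → ℝ) → ℝ)
    (L : Matrix (Fin m) (Fin p) ℝ)
    (lam1 lam2 mu1 mu2 del1 del2 : ℝ)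
    (hlam1 : 0 < lam1) (hlam2 : 0 < lam2)
    (hmu1 : 0 < mu1) (hmu2 : 0 < mu2)
    (hdel1 : 0 < del1) (hdel1' : del1 ≤ mu1)
    (hdel2 : 0 < del2) (hdel2' : del2 ≤ mu2)
    (Beta a u h pp : ℕ → Fin p → ℝ)
    (b v qq : ℕ → Fin m → ℝ)
    (hh : ∀ k : ℕ, IsSubgrad V (Beta (k+1)) (h (k+1)))
    (hpp : ∀ k : ℕ, IsSubgrad l1 (a (k+1)) (pp (k+1)))
    (hqq : ∀ k : ℕ, IsSubgrad l1 (b (k+1)) (qq (k+1)))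
    (iter1 : ∀ k : ℕ, (0 : Fin p → ℝ) =
      h (k+1) + u k + L.transpose.mulVec (v k)
        + mu1 • (Beta (k+1) - a k)
        + mu2 • L.transpose.mulVec (L.mulVec (Beta (k+1)) - b k))
    (iter2 : ∀ k : ℕ, lam1 • pp (k+1) - u k + mu1 • (a (k+1) - Beta (k+1)) = 0)
    (iter3 : ∀ k : ℕ, lam2 • qq (k+1) - v k + mu2 • (b (k+1) - L.mulVec (Beta (k+1))) = 0)
    (iter4 : ∀ k : ℕ, u (k+1) = u k + del1 • (Beta (k+1) - a (k+1)))
    (iter5 : ∀ k : ℕ, v (k+1) = v k + del2 • (L.mulVec (Beta (k+1)) - b (k+1)))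
    (Bstar hstar pstar : Fin p → ℝ) (qstar : Fin m → ℝ)
    (hhs : IsSubgrad V Bstar hstar)
    (hps : IsSubgrad l1 Bstar pstar)
    (hqs : IsSubgrad l1 (L.mulVec Bstar) qstar)
    (hopt : hstar + lam1 • pstar + lam2 • L.transpose.mulVec qstar = 0) :
    Tendsto (fun k : ℕ => l1 (Beta k) - l1 Bstar - dotp pstar (Beta k - Bstar))
      atTop (nhds 0) ∧
    Tendsto (fun k : ℕ =>
        l1 (L.mulVec (Beta k)) - l1 (L.mulVec Bstar)
          - dotp qstar (L.mulVec (Beta k) - L.mulVec Bstar))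
      atTop (nhds 0) := by
  have hE k := splitBregmanLyapunov_nonneg hdel1.le hdel2.le hmu1.le hmu2.le
    (u k - lam1 • pstar) (a k - Bstar) (v k - lam2 • qstar) (b k - L *ᵥ Bstar)
  have hstep k := splitBregmanLyapunov_step_le L hlam1.le hlam2.le hdel1.le hdel1' hdel2.le
    hdel2' (hh k) (hpp k) (hqq k) hhs hopt (iter1 k) (iter2 k) (iter3 k) (iter4 k) (iter5 k)
  have hDa k := hps.bregmanDist_nonneg (a (k + 1))
  have hDb k := hqs.bregmanDist_nonneg (b (k + 1))
  have hSa k := dotProduct_self_nonneg (Beta (k + 1) - a k)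
  have hSb k := dotProduct_self_nonneg (L *ᵥ Beta (k + 1) - b k)
  have c1 : 0 < 2 * del1 * del2 * lam1 := by positivity
  have c2 : 0 < 2 * del1 * del2 * lam2 := by positivity
  have c3 : 0 < del1 * del2 * mu1 := by positivity
  have c4 : 0 < del1 * del2 * mu2 := by positivity
  have hDa0 := tendsto_zero_of_succ_add_mul_le c1 hE hDa fun k => by
    linarith [hstep k, mul_nonneg c2.le (hDb k), mul_nonneg c3.le (hSa k),
      mul_nonneg c4.le (hSb k)]
  have hDb0 := tendsto_zero_of_succ_add_mul_le c2 hE hDb fun k => by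
    linarith [hstep k, mul_nonneg c1.le (hDa k), mul_nonneg c3.le (hSa k),
      mul_nonneg c4.le (hSb k)]
  have hSa0 := tendsto_zero_of_succ_add_mul_le c3 hE hSa fun k => by
    linarith [hstep k, mul_nonneg c1.le (hDa k), mul_nonneg c2.le (hDb k),
      mul_nonneg c4.le (hSb k)]
  have hSb0 := tendsto_zero_of_succ_add_mul_le c4 hE hSb fun k => by
    linarith [hstep k, mul_nonneg c1.le (hDa k), mul_nonneg c2.le (hDb k),
      mul_nonneg c3.le (hSa k)]
  constructor
  · exact (tendsto_add_atTop_iff_nat 1).mp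
      (hps.tendsto_bregmanDist_l1 ((tendsto_add_atTop_iff_nat 1).mp hDa0) hSa0)
  · exact (tendsto_add_atTop_iff_nat 1).mp
      (hqs.tendsto_bregmanDist_l1 ((tendsto_add_atTop_iff_nat 1).mp hDb0) hSb0)

/-- The ℓ1 Bregman distances along the split Bregman iterates vanish. -/
theorem splitBregman_bregmanDistance_l1_vanishes
    {p m : ℕ} (hp : 0 < p) (hm : 0 < m)
    (V : (Fin p → ℝ) → ℝ) (hV : ConvexOn ℝ Set.univ V)
    (L : Matrix (Fin m) (Fin p) ℝ)
    (lam1 lam2 mu1 mu2 del1 del2 : ℝ)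
    (hlam1 : 0 < lam1) (hlam2 : 0 < lam2)
    (hmu1 : 0 < mu1) (hmu2 : 0 < mu2)
    (hdel1 : 0 < del1) (hdel1' : del1 ≤ mu1)
    (hdel2 : 0 < del2) (hdel2' : del2 ≤ mu2)
    (Beta a u h pp : ℕ → Fin p → ℝ)
    (b v qq : ℕ → Fin m → ℝ)
    (hh : ∀ k : ℕ, IsSubgrad V (Beta (k+1)) (h (k+1)))
    (hpp : ∀ k : ℕ, IsSubgrad l1 (a (k+1)) (pp (k+1)))
    (hqq : ∀ k : ℕ, IsSubgrad l1 (b (k+1)) (qq (k+1)))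
    (iter1 : ∀ k : ℕ, (0 : Fin p → ℝ) =
      h (k+1) + u k + L.transpose.mulVec (v k)
        + mu1 • (Beta (k+1) - a k)
        + mu2 • L.transpose.mulVec (L.mulVec (Beta (k+1)) - b k))
    (iter2 : ∀ k : ℕ, lam1 • pp (k+1) - u k + mu1 • (a (k+1) - Beta (k+1)) = 0)
    (iter3 : ∀ k : ℕ, lam2 • qq (k+1) - v k + mu2 • (b (k+1) - L.mulVec (Beta (k+1))) = 0)
    (iter4 : ∀ k : ℕ, u (k+1) = u k + del1 • (Beta (k+1) - a (k+1)))
    (iter5 : ∀ k : ℕ, v (k+1) = v k + del2 • (L.mulVec (Beta (k+1)) - b (k+1)))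
    (Bstar hstar pstar : Fin p → ℝ) (qstar : Fin m → ℝ)
    (hmin : ∀ x : Fin p → ℝ,
      V Bstar + lam1 * l1 Bstar + lam2 * l1 (L.mulVec Bstar)
        ≤ V x + lam1 * l1 x + lam2 * l1 (L.mulVec x))
    (hhs : IsSubgrad V Bstar hstar)
    (hps : IsSubgrad l1 Bstar pstar)
    (hqs : IsSubgrad l1 (L.mulVec Bstar) qstar)
    (hopt : hstar + lam1 • pstar + lam2 • L.transpose.mulVec qstar = 0) :
    Tendsto (fun k : ℕ => l1 (Beta k) - l1 Bstar - dotp pstar (Beta k - Bstar))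
      atTop (nhds 0) ∧
    Tendsto (fun k : ℕ =>
        l1 (L.mulVec (Beta k)) - l1 (L.mulVec Bstar)
          - dotp qstar (L.mulVec (Beta k) - L.mulVec Bstar))
      atTop (nhds 0) :=
  splitBregman_bregmanDistance_l1_vanishes_general V L lam1 lam2 mu1 mu2 del1 del2 hlam1 hlam2 hmu1
    hmu2 hdel1 hdel1' hdel2 hdel2' Beta a u h pp b v qq hh hpp hqq iter1 iter2 iter3 iter4 iter5
    Bstar hstar pstar qstar hhs hps hqs hopt
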